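/- arXiv:2105.09806 — 3 statements merged into one kernel-verified Lean document; each statement's English description precedes it below -/
import Mathlib

section
/- Let G be a connected graph and H a connected induced subgraph of G such that every path in G between two distinct vertices of H is entirely contained in H. Then for every vertex u of G not in H there exists a unique vertex v_H(u) of H such that every path in G from u to any vertex of H passes through v_H(u). -/
/-!
Follow any path from `u` into `S` up to its first vertex `v` in `S`. If another path from `u`
reached `S` first at some `v' ≠ v`, then the two initial segments would combine into a walk from
`v` to `v'` none of whose edges joins two vertices of `S`. Shortening it to a path yields a path
between distinct vertices of `S` that must leave `S`, contrary to the hypothesis on `S`.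
-/

namespace SimpleGraph.Walk

variable {V : Type*} {G : SimpleGraph V} {S : Set V}

theorem exists_walk_meeting_set_only_at_end {u w : V} (p : G.Walk u w) (hw : w ∈ S) :
    ∃ v ∈ S, ∃ q : G.Walk u v, q.support ⊆ p.support ∧ ∀ x ∈ q.support, x ∈ S → x = v := by
  induction p with
  | nil => exact ⟨_, hw, nil, List.Subset.refl _, by simp⟩
  | @cons a b c hab r ih =>
    by_cases ha : a ∈ S
    · exact ⟨a, ha, nil, by simp, by simp⟩
    obtain ⟨v, hv, q, hsub, hq⟩ := ih hw
    refine ⟨v, hv, cons hab q, List.cons_subset_cons a hsub, ?_⟩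
    simp only [support_cons, List.mem_cons, forall_eq_or_imp]
    exact ⟨fun h => absurd h ha, hq⟩

theorem notMem_of_mem_edges_of_meets_set_only_at {u v c a b : V} (q : G.Walk u v)
    (hq : ∀ x ∈ q.support, x ∈ S → x = c) (he : s(a, b) ∈ q.edges) (ha : a ∈ S) : b ∉ S :=
  fun hb => (q.adj_of_mem_edges he).ne <|
    (hq a (q.fst_mem_support_of_mem_edges he) ha).trans
      (hq b (q.snd_mem_support_of_mem_edges he) hb).symm

end SimpleGraph.Walk

open SimpleGraph

theorem eq_of_walks_meeting_set_only_at_end {V : Type*} {G : SimpleGraph V} {S : Set V}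
    (hspec : ∀ a b : V, a ∈ S → b ∈ S → a ≠ b →
      ∀ (p : G.Walk a b), p.IsPath → ∀ x ∈ p.support, x ∈ S)
    {u v v' : V} (hv : v ∈ S) (hv' : v' ∈ S) (q : G.Walk u v) (q' : G.Walk u v')
    (hq : ∀ x ∈ q.support, x ∈ S → x = v) (hq' : ∀ x ∈ q'.support, x ∈ S → x = v') :
    v = v' := by
  classical
  by_contra hne
  set π := (q.reverse.append q').bypass
  have hπS : ∀ x ∈ π.support, x ∈ S := hspec v v' hv hv' hne π (Walk.bypass_isPath _)
  have he : s(v, π.snd) ∈ π.edges := Walk.mk_start_snd_mem_edges (Walk.not_nil_of_ne hne)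
  have hsnd : π.snd ∈ S := hπS _ (π.snd_mem_support_of_mem_edges he)
  have he' := Walk.edges_bypass_subset_edges _ he
  rw [Walk.edges_append, List.mem_append, Walk.edges_reverse, List.mem_reverse] at he'
  rcases he' with he' | he'
  · exact q.notMem_of_mem_edges_of_meets_set_only_at hq he' hv hsnd
  · exact q'.notMem_of_mem_edges_of_meets_set_only_at hq' he' hv hsnd

theorem special_subgraph_gate_general {V : Type*} (G : SimpleGraph V)
    (hG : G.Connected) (S : Set V) (hS : (G.induce S).Connected)
    (hspec : ∀ a b : V, a ∈ S → b ∈ S → a ≠ b →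
      ∀ (p : G.Walk a b), p.IsPath → ∀ x ∈ p.support, x ∈ S)
    (u : V) :
    ∃! v : V, v ∈ S ∧ ∀ w ∈ S, ∀ (p : G.Walk u w), p.IsPath → v ∈ p.support := by
  classical
  obtain ⟨⟨w₀, hw₀⟩⟩ := hS.nonempty
  obtain ⟨p₀⟩ := hG u w₀
  obtain ⟨v, hv, q, -, hq⟩ := p₀.exists_walk_meeting_set_only_at_end hw₀
  refine ⟨v, ⟨hv, fun w hw r _ => ?_⟩, fun y ⟨hy, hgate⟩ => ?_⟩
  · obtain ⟨v', hv', q', hsub, hq'⟩ := r.exists_walk_meeting_set_only_at_end hw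
    rw [eq_of_walks_meeting_set_only_at_end hspec hv hv' q q' hq hq']
    exact hsub q'.end_mem_support
  · exact hq y (q.support_bypass_subset_support (hgate v hv q.bypass q.bypass_isPath)) hy

/-- If `H` (with vertex set `S`) is a connected induced subgraph of a connected graph `G`
such that every path in `G` between two distinct vertices of `S` is entirely contained
in `S`, then every vertex `u ∉ S` has a unique gate vertex `v ∈ S` through which every
path from `u` to a vertex of `S` passes. -/
theorem special_subgraph_gate {V : Type*} [Fintype V] (G : SimpleGraph V)
    (hG : G.Connected) (S : Set V) (hS : (G.induce S).Connected)
    (hspec : ∀ a b : V, a ∈ S → b ∈ S → a ≠ b →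
      ∀ (p : G.Walk a b), p.IsPath → ∀ x ∈ p.support, x ∈ S)
    (u : V) (hu : u ∉ S) :
    ∃! v : V, v ∈ S ∧ ∀ w ∈ S, ∀ (p : G.Walk u w), p.IsPath → v ∈ p.support :=
  special_subgraph_gate_general G hG S hS hspec u
end

section
/- Let G be a connected graph and H a special connected induced subgraph of G. Define f : V(G) → V(H) by f(w) = w for w ∈ V(H), and f(u) = the unique gate vertex of u in H otherwise. Then f is a graph homomorphism from G (with loops allowed, i.e., f maps adjacent vertices to vertices that are adjacent or equal) onto H, and f restricted to V(H) is the identity; i.e., H is a retract of the reflexive closure of G. -/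
/-!
Let `p` be a path from `u ∉ S` to its gate `g`. Every path from `u` into `S` passes through `g`,
so applying this to the initial segment of `p` up to any vertex of `S` shows that `g` is the only
vertex of `S` on `p`. If `v` is a neighbour of `u`, extending `p` by the edge `vu` gives a walk
from `v` to `g`; the gate of `v` lies on it, so it is either `v` itself (then `v ∈ S` and the
path `u v` forces `g = v`) or a vertex of `S` on `p`, i.e. `g`. Hence adjacent vertices outside
`S` have equal gates, and a vertex outside `S` and a neighbour in `S` are both sent to that
neighbour.
-/

namespace SimpleGraph

variable {V : Type*} {G : SimpleGraph V} {S : Set V} {u v g h : V}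

def IsGate (G : SimpleGraph V) (S : Set V) (u g : V) : Prop :=
  g ∈ S ∧ ∀ w ∈ S, ∀ p : G.Walk u w, p.IsPath → g ∈ p.support

theorem isGate_self_of_mem (hu : u ∈ S) : G.IsGate S u u :=
  ⟨hu, fun _ _ p _ => p.start_mem_support⟩

theorem IsGate.eq_of_mem_support (hg : G.IsGate S u g) {p : G.Walk u g} (hp : p.IsPath)
    {x : V} (hx : x ∈ p.support) (hxS : x ∈ S) : x = g := by
  classical
  by_contra hxg
  exact Walk.endpoint_notMem_support_takeUntil hp hx (Ne.symm hxg)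
    (hg.2 x hxS _ (hp.takeUntil hx))

theorem IsGate.eq_of_adj_of_mem (hg : G.IsGate S u g) (huS : u ∉ S) (huv : G.Adj u v)
    (hvS : v ∈ S) : g = v := by
  have hg_mem := hg.2 v hvS huv.toWalk huv.isPath_toWalk
  rw [huv.support_toWalk, List.mem_pair] at hg_mem
  exact hg_mem.resolve_left fun hgu => huS (hgu ▸ hg.1)

theorem IsGate.eq_or_mem_support_of_adj (hh : G.IsGate S v h) (hvu : G.Adj v u)
    (p : G.Walk u g) (hgS : g ∈ S) : h = v ∨ h ∈ p.support := by
  classical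
  have hh_mem := hh.2 g hgS _ (Walk.cons hvu p).bypass_isPath
  simpa using (Walk.cons hvu p).support_bypass_subset_support hh_mem

theorem IsGate.eq_of_adj_of_notMem (hg : G.IsGate S u g) (hh : G.IsGate S v h)
    (hreach : G.Reachable u g) (huS : u ∉ S) (huv : G.Adj u v) : g = h := by
  obtain ⟨p, hp⟩ := hreach.exists_isPath
  rcases hh.eq_or_mem_support_of_adj huv.symm p hg.1 with rfl | hh_mem
  · exact hg.eq_of_adj_of_mem huS huv hh.1
  · exact (hg.eq_of_mem_support hp hh_mem hh.1).symm

end SimpleGraph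

open SimpleGraph

theorem special_subgraph_retract_general {V : Type*} (G : SimpleGraph V)
    (hG : G.Connected) (S : Set V)
    (f : V → V)
    (hf_id : ∀ w ∈ S, f w = w)
    (hf_gate : ∀ u, u ∉ S → f u ∈ S ∧
      ∀ w ∈ S, ∀ (p : G.Walk u w), p.IsPath → f u ∈ p.support) :
    (∀ a : V, f a ∈ S) ∧
    (∀ a b : V, G.Adj a b → f a = f b ∨ G.Adj (f a) (f b)) := by
  have hgate : ∀ u, G.IsGate S u (f u) := fun u => by
    by_cases hu : u ∈ S
    · rw [hf_id u hu]
      exact isGate_self_of_mem hu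
    · exact hf_gate u hu
  refine ⟨fun a => (hgate a).1, fun a b hab => ?_⟩
  by_cases ha : a ∈ S
  · by_cases hb : b ∈ S
    · rw [hf_id a ha, hf_id b hb]
      exact Or.inr hab
    · exact Or.inl ((hgate b).eq_of_adj_of_notMem (hgate a) (hG.preconnected _ _) hb hab.symm).symm
  · exact Or.inl ((hgate a).eq_of_adj_of_notMem (hgate b) (hG.preconnected _ _) ha hab)

/-- Let `H` (with vertex set `S`) be a special connected induced subgraph of a connected
graph `G`. Define `f` to be the identity on `S` and to send each `u ∉ S` to its gate
vertex in `S`. Then `f` maps into `S`, is the identity on `S`, and maps adjacent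
vertices of `G` to equal or adjacent vertices: `H` is a retract of the reflexive
closure of `G`. -/
theorem special_subgraph_retract {V : Type*} [Fintype V] (G : SimpleGraph V)
    (hG : G.Connected) (S : Set V) (hS : (G.induce S).Connected)
    (hspec : ∀ a b : V, a ∈ S → b ∈ S → a ≠ b →
      ∀ (p : G.Walk a b), p.IsPath → ∀ x ∈ p.support, x ∈ S)
    (f : V → V)
    (hf_id : ∀ w ∈ S, f w = w)
    (hf_gate : ∀ u, u ∉ S → f u ∈ S ∧
      ∀ w ∈ S, ∀ (p : G.Walk u w), p.IsPath → f u ∈ p.support) :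
    (∀ a : V, f a ∈ S) ∧
    (∀ a b : V, G.Adj a b → f a = f b ∨ G.Adj (f a) (f b)) :=
  special_subgraph_retract_general G hG S f hf_id hf_gate
end

section
/- Let T be a finite tree rooted at a vertex r, and let u be a non-leaf vertex distinct from r. Then there exists a leaf u' that is a descendant of u (u lies on the path from u' to r) with u' ≠ u, and for such a leaf, for every vertex R of T, d(u, R) can be recovered from d(u', R) and d(r, R): specifically, letting x be the median of u', r, R (the common vertex of the three pairwise paths), d(u,R) = d(u,x) + d(x,R). -/
open SimpleGraph

section Helpers

variable {V : Type*} [DecidableEq V] {G : SimpleGraph V}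

/-- In a tree, every path realizes the distance between its endpoints. -/
private lemma tree_path_length_eq_dist (hT : G.IsTree) {a b : V} (p : G.Walk a b)
    (hp : p.IsPath) : p.length = G.dist a b := by
  obtain ⟨q, hq⟩ := hT.isConnected.exists_walk_length_eq_dist a b
  have hqp : q.bypass.IsPath := q.bypass_isPath
  have hqlen : q.bypass.length = G.dist a b :=
    le_antisymm (hq ▸ q.length_bypass_le) (SimpleGraph.dist_le _)
  have heq : (⟨p, hp⟩ : G.Path a b) = ⟨q.bypass, hqp⟩ := hT.IsAcyclic.path_unique _ _
  have := congrArg (fun P : G.Path a b => (P : G.Walk a b).length) heq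
  simpa [hqlen] using this

/-- Betweenness from membership in the support of a path in a tree. -/
private lemma tree_dist_add_of_mem_support (hT : G.IsTree) {a b c : V} (p : G.Walk a b)
    (hp : p.IsPath) (hc : c ∈ p.support) : G.dist a b = G.dist a c + G.dist c b := by
  have hlen := congrArg SimpleGraph.Walk.length (p.take_spec hc)
  rw [SimpleGraph.Walk.length_append] at hlen
  rw [← tree_path_length_eq_dist hT p hp, ← hlen,
    tree_path_length_eq_dist hT _ (hp.takeUntil hc),
    tree_path_length_eq_dist hT _ (hp.dropUntil hc)]

/-- If `c` is metrically between `a` and `b` in a tree, there is a path from `a` to `b`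
through `c`. -/
private lemma tree_exists_path_through (hT : G.IsTree) {a b c : V}
    (h : G.dist a b = G.dist a c + G.dist c b) :
    ∃ p : G.Walk a b, p.IsPath ∧ c ∈ p.support := by
  obtain ⟨q1, h1⟩ := hT.isConnected.exists_walk_length_eq_dist a c
  obtain ⟨q2, h2⟩ := hT.isConnected.exists_walk_length_eq_dist c b
  refine ⟨q1.append q2, ?_, ?_⟩
  · exact (q1.append q2).isPath_of_length_eq_dist
      (by rw [SimpleGraph.Walk.length_append, h1, h2, h])
  · rw [SimpleGraph.Walk.mem_support_append_iff]
    exact Or.inl q1.end_mem_support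

/-- Two points on a geodesic in a tree are linearly ordered by their distance to an end. -/
private lemma tree_ordered (hT : G.IsTree) {a b c m : V}
    (hc : G.dist a b = G.dist a c + G.dist c b)
    (hm : G.dist a b = G.dist a m + G.dist m b)
    (hle : G.dist a m ≤ G.dist a c) :
    G.dist a c = G.dist a m + G.dist m c := by
  obtain ⟨p, hp, hcp⟩ := tree_exists_path_through hT hc
  obtain ⟨q, hq, hmq⟩ := tree_exists_path_through hT hm
  have heq : (⟨p, hp⟩ : G.Path a b) = ⟨q, hq⟩ := hT.IsAcyclic.path_unique _ _
  have hmp : m ∈ p.support := by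
    rw [show p = q from congrArg Subtype.val heq]; exact hmq
  have hm' : m ∈ (p.takeUntil c hcp).support ∨ m ∈ (p.dropUntil c hcp).support := by
    rw [← SimpleGraph.Walk.mem_support_append_iff, p.take_spec hcp]; exact hmp
  rcases hm' with h | h
  · exact tree_dist_add_of_mem_support hT _ (hp.takeUntil hcp) h
  · have h2 : G.dist c b = G.dist c m + G.dist m b :=
      tree_dist_add_of_mem_support hT _ (hp.dropUntil hcp) h
    have hcomm : G.dist m c = G.dist c m := SimpleGraph.dist_comm
    omega

/-- In a tree, a vertex `u ≠ r` of degree at least two has a neighbor `v` such that `u`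
lies on the path from `v` to `r`. -/
private lemma tree_exists_far_neighbor [Fintype V] [DecidableRel G.Adj] (hT : G.IsTree)
    {r u : V} (hur : u ≠ r) (hdeg : 2 ≤ G.degree u) :
    ∃ v, G.Adj u v ∧ G.dist v u + G.dist u r = G.dist v r := by
  obtain ⟨P0, hP0⟩ := hT.isConnected.exists_walk_length_eq_dist u r
  have hP0path : P0.IsPath := P0.isPath_of_length_eq_dist hP0
  -- every "bad" neighbor equals the parent `P0.getVert 1`
  have hbad : ∀ v, G.Adj u v → ¬(G.dist v u + G.dist u r = G.dist v r) → v = P0.getVert 1 := by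
    intro v hadj hvbad
    obtain ⟨q, hql⟩ := hT.isConnected.exists_walk_length_eq_dist v r
    have hqpath : q.IsPath := q.isPath_of_length_eq_dist hql
    have hu_not : u ∉ q.support := by
      intro hmem
      exact hvbad (tree_dist_add_of_mem_support hT q hqpath hmem).symm
    have hconspath : (SimpleGraph.Walk.cons hadj q).IsPath := hqpath.cons hu_not
    have heq : (⟨SimpleGraph.Walk.cons hadj q, hconspath⟩ : G.Path u r) = ⟨P0, hP0path⟩ :=
      hT.IsAcyclic.path_unique _ _
    have hwalk : SimpleGraph.Walk.cons hadj q = P0 := congrArg Subtype.val heq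
    have : (SimpleGraph.Walk.cons hadj q).getVert 1 = P0.getVert 1 := by rw [hwalk]
    rwa [SimpleGraph.Walk.getVert_cons_succ, SimpleGraph.Walk.getVert_zero] at this
  -- there are two distinct neighbors
  have hcard : 1 < (G.neighborFinset u).card := by
    rwa [SimpleGraph.card_neighborFinset_eq_degree]
  obtain ⟨v₁, hv₁, v₂, hv₂, hne⟩ := Finset.one_lt_card.mp hcard
  rw [SimpleGraph.mem_neighborFinset] at hv₁ hv₂
  by_cases h₁ : G.dist v₁ u + G.dist u r = G.dist v₁ r
  · exact ⟨v₁, hv₁, h₁⟩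
  by_cases h₂ : G.dist v₂ u + G.dist u r = G.dist v₂ r
  · exact ⟨v₂, hv₂, h₂⟩
  exact absurd ((hbad v₁ hv₁ h₁).trans (hbad v₂ hv₂ h₂).symm) hne

end Helpers

/-- Let `T` be a finite tree rooted at `r` and `u` a non-leaf vertex distinct from `r`.
Then there is a leaf `u' ≠ u` that is a descendant of `u` (i.e. `u` lies on the path
from `u'` to `r`), and for any such leaf, for every vertex `R`, letting `x` be the
median of `u'`, `r`, `R` (the common vertex of the three pairwise geodesics), we have
`d(u,R) = d(u,x) + d(x,R)`. -/
theorem tree_nonleaf_probe_via_leaf {V : Type*} [Fintype V] (G : SimpleGraph V)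
    [DecidableRel G.Adj] (hT : G.IsTree) (r u : V)
    (hu_nonleaf : G.degree u ≠ 1) (hur : u ≠ r) :
    (∃ u' : V, G.degree u' = 1 ∧ u' ≠ u ∧
      G.dist u' u + G.dist u r = G.dist u' r) ∧
    (∀ u' : V, G.degree u' = 1 → u' ≠ u →
      G.dist u' u + G.dist u r = G.dist u' r →
      ∀ R x : V,
        G.dist u' r = G.dist u' x + G.dist x r →
        G.dist u' R = G.dist u' x + G.dist x R →
        G.dist r R = G.dist r x + G.dist x R →
        G.dist u R = G.dist u x + G.dist x R) := by
  classical
  have hconn := hT.isConnected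
  -- degree of a vertex distinct from `r` is positive
  have hdegpos : ∀ a : V, a ≠ r → 0 < G.degree a := by
    intro a har
    rw [SimpleGraph.degree_pos_iff_exists_adj]
    obtain ⟨p, hp⟩ := hconn.exists_walk_length_eq_dist a r
    have hlpos : 0 < p.length := by
      rcases Nat.eq_zero_or_pos p.length with h0 | h
      · exact absurd (SimpleGraph.Walk.eq_of_length_eq_zero h0) har
      · exact h
    have := p.adj_getVert_succ hlpos
    rw [SimpleGraph.Walk.getVert_zero] at this
    exact ⟨_, this⟩
  have hdeg2 : 2 ≤ G.degree u := by
    have := hdegpos u hur; omega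
  constructor
  · -- existence of the leaf
    obtain ⟨v, hvadj, hvS⟩ := tree_exists_far_neighbor hT hur hdeg2
    have hvu : G.dist v u = 1 := SimpleGraph.dist_eq_one_iff_adj.mpr hvadj.symm
    -- pick the farthest descendant of `u`
    set S : Finset V := Finset.univ.filter (fun w => G.dist w u + G.dist u r = G.dist w r)
      with hS
    have hvmem : v ∈ S := by simp [hS, hvS]
    obtain ⟨u', hu'S, hmax⟩ := S.exists_max_image (fun w => G.dist w r) ⟨v, hvmem⟩
    have hu'prop : G.dist u' u + G.dist u r = G.dist u' r := by
      simpa [hS] using hu'S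
    have hvle : G.dist v r ≤ G.dist u' r := hmax v hvmem
    have hupos : 0 < G.dist u r := hconn.pos_dist_of_ne hur
    have hu'u : u' ≠ u := by
      intro h; subst h
      have : G.dist u' r = G.dist u' r + 1 := by
        have := hu'prop
        omega
      omega
    have hu'r : u' ≠ r := by
      intro h; subst h
      simp only [SimpleGraph.dist_self] at hvle
      omega
    refine ⟨u', ?_, hu'u, hu'prop⟩
    -- u' is a leaf
    by_contra hdeg1
    have hdeg2' : 2 ≤ G.degree u' := by
      have := hdegpos u' hu'r; omega
    obtain ⟨w, hwadj, hwS⟩ := tree_exists_far_neighbor hT hu'r hdeg2'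
    have hwu' : G.dist w u' = 1 := SimpleGraph.dist_eq_one_iff_adj.mpr hwadj.symm
    have ht1 : G.dist w u ≤ G.dist w u' + G.dist u' u := hconn.dist_triangle
    have ht2 : G.dist w r ≤ G.dist w u + G.dist u r := hconn.dist_triangle
    have hwmem : w ∈ S := by
      simp only [hS, Finset.mem_filter, Finset.mem_univ, true_and]
      omega
    have := hmax w hwmem
    omega
  · -- the probe identity
    intro u' _ _ h1 R x hx1 hx2 hx3
    have tA : G.dist u R ≤ G.dist u x + G.dist x R := hconn.dist_triangle
    have c1 : G.dist r x = G.dist x r := SimpleGraph.dist_comm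
    have c2 : G.dist r u = G.dist u r := SimpleGraph.dist_comm
    have c3 : G.dist u x = G.dist x u := SimpleGraph.dist_comm
    rcases le_total (G.dist u' x) (G.dist u' u) with hle | hle
    · -- x lies between u' and u
      have hA : G.dist u' u = G.dist u' x + G.dist x u :=
        tree_ordered hT h1.symm hx1 hle
      have tB : G.dist r R ≤ G.dist r u + G.dist u R := hconn.dist_triangle
      omega
    · -- u lies between u' and x
      have hB : G.dist u' x = G.dist u' u + G.dist u x :=
        tree_ordered hT hx1 h1.symm hle
      have tC : G.dist u' R ≤ G.dist u' u + G.dist u R := hconn.dist_triangle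
      omega
end
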